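/- arXiv:1711.05452 — 6 statements merged into one kernel-verified Lean document; each statement's English description precedes it below -/
import Mathlib

section
/- Let (K, φ) be a topological dynamical system and let q : K → L be a projection onto its maximal trivial factor. Then the Koopman operator T_φ is mean ergodic on C(K) if and only if for every l ∈ L and every f ∈ C(K) there exists a constant c_l ∈ ℂ such that the Cesàro averages A_n f(x) = (1/n) Σ_{k=0}^{n-1} f(φ^k(x)) converge to c_l for every x ∈ K_l. -/
open Filter

/-- The Koopman operator of `φ` is mean ergodic on `C(K)`: for every continuous function
`f`, the Cesàro averages `A_n f = (1/n) ∑_{k<n} f ∘ φ^k` converge in the sup norm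
(i.e. uniformly) to some function. -/
def MeanErgodic {K : Type*} [TopologicalSpace K] (φ : K → K) : Prop :=
  ∀ f : C(K, ℂ), ∃ g : K → ℂ,
    TendstoUniformly (fun (n : ℕ) (x : K) => (n : ℂ)⁻¹ • ∑ k ∈ Finset.range n, f (φ^[k] x))
      g atTop

/-!
If the averages converge uniformly, their limit is continuous and `φ`-invariant, so it factors
through `q` and is constant on the fibres.

Conversely, pointwise convergence to `0` of the averages of a continuous real `g` on a compact
`φ`-invariant set `C` is automatically uniform. Otherwise `A_N g (x_N) ≥ ε` for infinitely many
`N`; cutting the orbit segment of `x_N` at a minimum of the partial sums of `g - ε/2` gives points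
of `C` whose partial sums of `g - ε/2` stay nonnegative for longer and longer times, and by
compactness some `z ∈ C` has `A_m g (z) ≥ ε/2` for all `m ≥ 1`. Applied on the fibres of `q`, this
makes the fibrewise limit `c ∘ q` continuous, because `q` is a closed map; applied to
`f - c ∘ q` on `K`, it gives uniform convergence.
-/

open Set Topology

section Combinatorics

variable {X : Type*} {φ : X → X}

theorem exists_le_birkhoffSum_nonpos_forall_iterate_nonneg {M : Type*} [AddCommGroup M]
    [LinearOrder M] [IsOrderedAddMonoid M] (g : X → M) (x : X) (N : ℕ) :
    ∃ t ≤ N, birkhoffSum φ g t x ≤ 0 ∧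
      ∀ m, t + m ≤ N → 0 ≤ birkhoffSum φ g m (φ^[t] x) := by
  obtain ⟨t, ht, hmin⟩ :=
    (Finset.range (N + 1)).exists_min_image (birkhoffSum φ g · x) Finset.nonempty_range_add_one
  refine ⟨t, Nat.lt_succ_iff.mp (Finset.mem_range.mp ht), ?_, fun m hm => ?_⟩
  · simpa using hmin 0 (by simp)
  · simpa [birkhoffSum_add] using hmin (t + m) (Finset.mem_range.mpr (by omega))

theorem birkhoffSum_le_nsmul {M : Type*} [AddCommMonoid M] [PartialOrder M]
    [IsOrderedAddMonoid M] {C : Set X} {g : X → M} {b : M} (hCφ : MapsTo φ C C)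
    (hb : ∀ x ∈ C, g x ≤ b) {x : X} (hx : x ∈ C) (n : ℕ) :
    birkhoffSum φ g n x ≤ n • b := by
  simpa [birkhoffSum] using
    (Finset.range n).sum_le_card_nsmul _ b fun k _ => hb _ (hCφ.iterate k hx)

/-- Cut the orbit segment `x, …, φ^[N-1] x` at a minimum `t` of the Birkhoff sums; when the
sum over the whole segment is at least `γ N`, the remaining segment is long, of length at least
`γ N / M`. -/
theorem exists_mem_forall_le_birkhoffSum_nonneg {C : Set X} {g : X → ℝ} {M γ : ℝ}
    (hCφ : MapsTo φ C C) (hM : ∀ x ∈ C, g x ≤ M) (hM₀ : 0 < M) (hγ : 0 < γ)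
    (hfreq : ∃ᶠ N in atTop, ∃ x ∈ C, γ * N ≤ birkhoffSum φ g N x) (m : ℕ) :
    ∃ y ∈ C, ∀ k ≤ m, 0 ≤ birkhoffSum φ g k y := by
  have hlarge : ∀ᶠ N : ℕ in atTop, m * M < γ * N :=
    (tendsto_natCast_atTop_atTop.const_mul_atTop hγ).eventually_gt_atTop _
  obtain ⟨N, ⟨x, hxC, hxN⟩, hmN⟩ := (hfreq.and_eventually hlarge).exists
  obtain ⟨t, htN, ht₀, ht⟩ := exists_le_birkhoffSum_nonpos_forall_iterate_nonneg g x N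
  refine ⟨φ^[t] x, hCφ.iterate t hxC, fun k hk => ht k ?_⟩
  have hsplit := birkhoffSum_add φ g t (N - t) x
  rw [Nat.add_sub_cancel' htN] at hsplit
  have htail := birkhoffSum_le_nsmul hCφ hM (hCφ.iterate t hxC) (N - t)
  rw [nsmul_eq_mul] at htail
  have hlen : (m : ℝ) < (N - t : ℕ) := lt_of_mul_lt_mul_right (by linarith) hM₀.le
  have hlen' : m < N - t := by exact_mod_cast hlen
  omega

end Combinatorics

section Topological

variable {X : Type*} [TopologicalSpace X] {φ : X → X}

theorem continuous_birkhoffSum {M : Type*} [AddCommMonoid M] [TopologicalSpace M] [ContinuousAdd M]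
    {g : X → M} (hφ : Continuous φ) (hg : Continuous g) (n : ℕ) :
    Continuous (birkhoffSum φ g n) :=
  continuous_finsetSum _ fun k _ => hg.comp (hφ.iterate k)

theorem continuous_birkhoffAverage (R : Type*) {M : Type*} [DivisionSemiring R] [AddCommMonoid M]
    [Module R M] [TopologicalSpace M] [ContinuousAdd M] [ContinuousConstSMul R M]
    {g : X → M} (hφ : Continuous φ) (hg : Continuous g) (n : ℕ) :
    Continuous (birkhoffAverage R φ g n) :=
  (continuous_birkhoffSum hφ hg n).const_smul _

variable {C : Set X}

theorem exists_mem_forall_birkhoffSum_nonneg {g : X → ℝ} {γ : ℝ} (hφ : Continuous φ)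
    (hg : Continuous g) (hC : IsCompact C) (hCφ : MapsTo φ C C) (hγ : 0 < γ)
    (hfreq : ∃ᶠ N in atTop, ∃ x ∈ C, γ * N ≤ birkhoffSum φ g N x) :
    ∃ z ∈ C, ∀ m, 0 ≤ birkhoffSum φ g m z := by
  obtain ⟨b, hb⟩ := hC.bddAbove_image hg.continuousOn
  have hM : ∀ x ∈ C, g x ≤ max b 1 := fun x hx => (hb ⟨x, hx, rfl⟩).trans (le_max_left _ _)
  obtain ⟨z, hzC, hz⟩ := hC.inter_iInter_nonempty (fun m => {y | 0 ≤ birkhoffSum φ g m y})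
    (fun m => isClosed_le continuous_const (continuous_birkhoffSum hφ hg m)) fun u => by
      obtain ⟨y, hyC, hy⟩ := exists_mem_forall_le_birkhoffSum_nonneg hCφ hM
        (lt_max_of_lt_right one_pos) hγ hfreq (u.sup id)
      exact ⟨y, hyC, mem_iInter₂.mpr fun k hk => hy k (Finset.le_sup (f := id) hk)⟩
  exact ⟨z, hzC, mem_iInter.mp hz⟩

theorem eventually_birkhoffAverage_lt {g : X → ℝ} (hφ : Continuous φ) (hg : Continuous g)
    (hC : IsCompact C) (hCφ : MapsTo φ C C)
    (hlim : ∀ x ∈ C, Tendsto (birkhoffAverage ℝ φ g · x) atTop (𝓝 0)) {ε : ℝ} (hε : 0 < ε) :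
    ∀ᶠ n in atTop, ∀ x ∈ C, birkhoffAverage ℝ φ g n x < ε := by
  by_contra hne
  have hsum (n : ℕ) (x : X) :
      birkhoffSum φ (g - fun _ => ε / 2) n x = birkhoffSum φ g n x - n * (ε / 2) := by
    simp [birkhoffSum]
  have hfreq : ∃ᶠ N in atTop, ∃ x ∈ C, ε / 2 * N ≤ birkhoffSum φ (g - fun _ => ε / 2) N x := by
    refine ((not_eventually.mp hne).and_eventually (eventually_gt_atTop 0)).mono ?_
    rintro N ⟨hN, hN₀⟩
    push Not at hN
    obtain ⟨x, hxC, hx⟩ := hN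
    have : ε * N ≤ birkhoffSum φ g N x := by
      rwa [birkhoffAverage, smul_eq_mul, le_inv_mul_iff₀ (by positivity), mul_comm] at hx
    exact ⟨x, hxC, by rw [hsum]; linarith⟩
  obtain ⟨z, hzC, hz⟩ :=
    exists_mem_forall_birkhoffSum_nonneg hφ (hg.sub continuous_const) hC hCφ (half_pos hε) hfreq
  obtain ⟨m, hm, hm₀⟩ :=
    (((hlim z hzC).eventually (gt_mem_nhds (half_pos hε))).and (eventually_gt_atTop 0)).exists
  have := hz m
  rw [hsum, sub_nonneg] at this
  rw [birkhoffAverage, smul_eq_mul, inv_mul_lt_iff₀ (by positivity)] at hm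
  linarith

theorem tendstoUniformlyOn_birkhoffAverage_zero {g : X → ℝ} (hφ : Continuous φ)
    (hg : Continuous g) (hC : IsCompact C) (hCφ : MapsTo φ C C)
    (hlim : ∀ x ∈ C, Tendsto (birkhoffAverage ℝ φ g · x) atTop (𝓝 0)) :
    TendstoUniformlyOn (birkhoffAverage ℝ φ g) 0 atTop C := by
  have hlim' : ∀ x ∈ C, Tendsto (birkhoffAverage ℝ φ (-g) · x) atTop (𝓝 0) := by
    simpa [birkhoffAverage_neg] using fun x hx => (hlim x hx).neg
  refine Metric.tendstoUniformlyOn_iff.mpr fun ε hε => ?_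
  filter_upwards [eventually_birkhoffAverage_lt hφ hg hC hCφ hlim hε,
    eventually_birkhoffAverage_lt hφ hg.neg hC hCφ hlim' hε] with n hup hlow x hx
  have := hlow x hx
  rw [birkhoffAverage_neg] at this
  rw [Pi.zero_apply, dist_zero_left, Real.norm_eq_abs, abs_lt]
  exact ⟨neg_lt.mp this, hup x hx⟩

theorem tendstoUniformlyOn_birkhoffAverage {f g : X → ℂ} (hφ : Continuous φ) (hf : Continuous f)
    (hg : Continuous g) (hgφ : g ∘ φ = g) (hC : IsCompact C) (hCφ : MapsTo φ C C)
    (hlim : ∀ x ∈ C, Tendsto (birkhoffAverage ℝ φ f · x) atTop (𝓝 (g x))) :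
    TendstoUniformlyOn (birkhoffAverage ℝ φ f) g atTop C := by
  have hA (n : ℕ) (hn : n ≠ 0) :
      birkhoffAverage ℝ φ (f - g) n = birkhoffAverage ℝ φ f n - g := by
    rw [birkhoffAverage_sub, Pi.sub_apply,
      birkhoffAverage_of_comp_eq ℝ hgφ (Nat.cast_ne_zero.mpr hn)]
  have hlim₀ (x : X) (hx : x ∈ C) :
      Tendsto (birkhoffAverage ℝ φ (f - g) · x) atTop (𝓝 0) := by
    refine (sub_self (g x) ▸ (hlim x hx).sub_const (g x)).congr' ?_
    filter_upwards [eventually_ne_atTop 0] with n hn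
    simp [hA n hn]
  have hpart (p : ℂ →L[ℝ] ℝ) :
      TendstoUniformlyOn (birkhoffAverage ℝ φ (p ∘ (f - g))) 0 atTop C := by
    refine tendstoUniformlyOn_birkhoffAverage_zero hφ (p.continuous.comp (hf.sub hg)) hC hCφ
      fun x hx => ?_
    have := (p.continuous.tendsto 0).comp (hlim₀ x hx)
    rw [map_zero] at this
    exact this.congr fun n => map_birkhoffAverage ℝ ℝ p φ (f - g) n x
  refine Metric.tendstoUniformlyOn_iff.mpr fun ε hε => ?_
  filter_upwards [Metric.tendstoUniformlyOn_iff.mp (hpart Complex.reCLM) _ (half_pos hε),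
    Metric.tendstoUniformlyOn_iff.mp (hpart Complex.imCLM) _ (half_pos hε),
    eventually_ne_atTop 0] with n hre him hn x hx
  have hre := hre x hx
  have him := him x hx
  rw [Pi.zero_apply, dist_zero_left, Real.norm_eq_abs, ← map_birkhoffAverage ℝ ℝ] at hre him
  calc dist (g x) (birkhoffAverage ℝ φ f n x) = ‖birkhoffAverage ℝ φ (f - g) n x‖ := by
        rw [hA n hn, dist_comm, dist_eq_norm, Pi.sub_apply]
    _ ≤ _ := Complex.norm_le_abs_re_add_abs_im _
    _ < ε := by simp only [Complex.reCLM_apply, Complex.imCLM_apply] at hre him; linarith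

end Topological

section Averages

variable {X : Type*} {φ : X → X}

theorem Convex.birkhoffAverage_mem {E : Type*} [AddCommGroup E] [Module ℝ E] {s : Set E}
    (hs : Convex ℝ s) {g : X → E} {x : X} (hx : ∀ k, g (φ^[k] x) ∈ s) {n : ℕ} (hn : n ≠ 0) :
    birkhoffAverage ℝ φ g n x ∈ s := by
  rw [birkhoffAverage, birkhoffSum, Finset.smul_sum]
  exact hs.sum_mem (fun _ _ => by positivity) (by simp [hn]) fun k _ => hx k

theorem birkhoffAverage_birkhoffAverage_comm (R : Type*) {M : Type*} [Semifield R]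
    [AddCommMonoid M] [Module R M] (g : X → M) (m n : ℕ) (x : X) :
    birkhoffAverage R φ (birkhoffAverage R φ g m) n x =
      birkhoffAverage R φ (birkhoffAverage R φ g n) m x := by
  simp only [birkhoffAverage, birkhoffSum, ← Finset.smul_sum, smul_smul, mul_comm]
  rw [Finset.sum_comm]
  simp only [← Function.iterate_add_apply, add_comm]

theorem mem_of_tendsto_birkhoffAverage {E : Type*} [NormedAddCommGroup E] [NormedSpace ℝ E]
    {s : Set E} (hs : Convex ℝ s) (hsc : IsClosed s) {g : X → E} {x : X} {b : E} {N : ℕ}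
    (hN : N ≠ 0) (hmem : ∀ k, birkhoffAverage ℝ φ g N (φ^[k] x) ∈ s)
    (hlim : ∀ k, Tendsto (birkhoffAverage ℝ φ g · (φ^[k] x)) atTop (𝓝 b)) : b ∈ s := by
  have hlimN : Tendsto (fun n => birkhoffAverage ℝ φ (birkhoffAverage ℝ φ g n) N x) atTop
      (𝓝 b) := by
    have := ((tendsto_finsetSum (Finset.range N) fun k _ => hlim k).const_smul (N : ℝ)⁻¹)
    rwa [Finset.sum_const, Finset.card_range, ← Nat.cast_smul_eq_nsmul ℝ,
      inv_smul_smul₀ (Nat.cast_ne_zero.mpr hN)] at this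
  refine hsc.mem_of_tendsto hlimN ?_
  filter_upwards [eventually_ne_atTop 0] with n hn
  rw [birkhoffAverage_birkhoffAverage_comm]
  exact hs.birkhoffAverage_mem hmem hn

end Averages

theorem comp_eq_of_tendsto_birkhoffAverage {X E : Type*} [NormedAddCommGroup E]
    [NormedSpace ℝ E] {φ : X → X} {f g : X → E} (hf : Bornology.IsBounded (range f))
    (hg : ∀ x, Tendsto (birkhoffAverage ℝ φ f · x) atTop (𝓝 (g x))) : g ∘ φ = g := by
  funext x
  refine tendsto_nhds_unique (hg (φ x)) ?_
  simpa using (tendsto_birkhoffAverage_apply_sub_birkhoffAverage' ℝ hf φ x).add (hg x)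

theorem eq_of_forall_continuousMap_eq {L : Type*} [TopologicalSpace L] [T35Space L] {a b : L}
    (h : ∀ g : C(L, ℂ), g a = g b) : a = b := by
  by_contra hab
  obtain ⟨g, hg, hgab⟩ := separatesPoints_continuous_of_t35Space hab
  exact hgab (Complex.ofReal_injective (h ⟨_, Complex.continuous_ofReal.comp hg⟩))

section Fibers

variable {K L : Type*} [TopologicalSpace K] [CompactSpace K] [TopologicalSpace L] [T2Space L]
  {φ : K → K} {q : K → L} {f : K → ℂ} {c : L → ℂ}

/-- Since `q` is a closed map, the fibres close to `q x₀` lie in any given neighbourhood of the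
fibre of `x₀`, on which the averages converge uniformly. -/
theorem continuous_comp_of_tendsto_birkhoffAverage (hφ : Continuous φ) (hq : Continuous q)
    (hqφ : q ∘ φ = q) (hf : Continuous f)
    (hc : ∀ x, Tendsto (birkhoffAverage ℝ φ f · x) atTop (𝓝 (c (q x)))) :
    Continuous (c ∘ q) := by
  have hqφk (k : ℕ) (x : K) : q (φ^[k] x) = q x := congrFun (Function.iterate_invariant hqφ k) x
  refine continuous_iff_continuousAt.mpr fun x₀ => Metric.tendsto_nhds.mpr fun ε hε => ?_
  have hF : TendstoUniformlyOn (birkhoffAverage ℝ φ f) (fun _ => c (q x₀)) atTop (q ⁻¹' {q x₀}) :=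
    tendstoUniformlyOn_birkhoffAverage hφ hf continuous_const rfl
      (isClosed_singleton.preimage hq).isCompact (fun x hx => (congrFun hqφ x).trans hx)
      fun x hx => hx ▸ hc x
  obtain ⟨N, hN, hN₀⟩ := ((Metric.tendstoUniformlyOn_iff.mp hF (ε / 2) (half_pos hε)).and
    (eventually_ne_atTop 0)).exists
  have hnear : ∀ᶠ y in 𝓝 (q x₀), ∀ x ∈ q ⁻¹' {y},
      birkhoffAverage ℝ φ f N x ∈ Metric.ball (c (q x₀)) (ε / 2) :=
    hq.isClosedMap.eventually_nhds_fiber (q x₀) fun x hx =>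
      (continuous_birkhoffAverage ℝ hφ hf N).continuousAt.preimage_mem_nhds
        (Metric.isOpen_ball.mem_nhds (Metric.mem_ball'.mpr (hN x hx)))
  filter_upwards [hq.continuousAt hnear] with x hx
  have : c (q x) ∈ Metric.closedBall (c (q x₀)) (ε / 2) :=
    mem_of_tendsto_birkhoffAverage (convex_closedBall _ _) Metric.isClosed_closedBall hN₀
      (fun k => Metric.ball_subset_closedBall (hx _ (hqφk k x))) fun k => hqφk k x ▸ hc _
  exact (Metric.mem_closedBall.mp this).trans_lt (half_lt_self hε)

theorem tendstoUniformly_birkhoffAverage_of_tendsto_fiberwise (hφ : Continuous φ)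
    (hq : Continuous q) (hqφ : q ∘ φ = q) (hf : Continuous f)
    (hc : ∀ x, Tendsto (birkhoffAverage ℝ φ f · x) atTop (𝓝 (c (q x)))) :
    TendstoUniformly (birkhoffAverage ℝ φ f) (c ∘ q) atTop := by
  rw [← tendstoUniformlyOn_univ]
  exact tendstoUniformlyOn_birkhoffAverage hφ hf
    (continuous_comp_of_tendsto_birkhoffAverage hφ hq hqφ hf hc)
    (by rw [Function.comp_assoc, hqφ]) isCompact_univ (mapsTo_univ _ _) fun x _ => hc x

end Fibers

theorem meanErgodic_iff_fiberwise_cesaro_constant_general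
    {K L : Type*} [TopologicalSpace K] [CompactSpace K]
    [TopologicalSpace L] [CompactSpace L] [T2Space L]
    (φ : K → K) (hφ : Continuous φ)
    (q : K → L) (hq : Continuous q)
    (hmax : ∀ f : C(K, ℂ), (∀ x, f (φ x) = f x) ↔ ∃ g : C(L, ℂ), f = g.comp ⟨q, hq⟩) :
    MeanErgodic φ ↔
      ∀ l : L, ∀ f : C(K, ℂ), ∃ c : ℂ, ∀ x ∈ q ⁻¹' {l},
        Tendsto (fun n : ℕ => (n : ℂ)⁻¹ • ∑ k ∈ Finset.range n, f (φ^[k] x))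
          atTop (nhds c) := by
  have hcesaro (f : K → ℂ) (n : ℕ) (x : K) :
      (n : ℂ)⁻¹ • ∑ k ∈ Finset.range n, f (φ^[k] x) = birkhoffAverage ℝ φ f n x :=
    birkhoffAverage_congr_ring ℂ ℝ φ f n x
  simp only [MeanErgodic, hcesaro]
  constructor
  · intro hme l f
    obtain ⟨g, hg⟩ := hme f
    have hgφ : g ∘ φ = g :=
      comp_eq_of_tendsto_birkhoffAverage (isCompact_range f.continuous).isBounded hg.tendsto_at
    obtain ⟨g', hg'⟩ := (hmax ⟨g, hg.continuous (.of_forall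
      (continuous_birkhoffAverage ℝ hφ f.continuous))⟩).mp (congrFun hgφ)
    refine ⟨g' l, fun x hx => ?_⟩
    have hgx : g x = g' l := (congrArg (· x) hg').trans (congrArg g' hx)
    exact hgx ▸ hg.tendsto_at x
  · intro H f
    have hqφ : q ∘ φ = q := funext fun x => eq_of_forall_continuousMap_eq fun g =>
      (hmax (g.comp ⟨q, hq⟩)).mpr ⟨g, rfl⟩ x
    choose c hc using fun l => H l f
    exact ⟨c ∘ q, tendstoUniformly_birkhoffAverage_of_tendsto_fiberwise hφ hq hqφ f.continuous
      fun x => hc (q x) x rfl⟩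

/-- Let `(K, φ)` be a topological dynamical system and `q : K → L` a
projection onto its maximal trivial factor.  Then the Koopman operator `T_φ` is mean ergodic
on `C(K)` if and only if for every `l ∈ L` and every `f ∈ C(K)` there is a constant
`c_l ∈ ℂ` such that the Cesàro averages `A_n f (x)` converge to `c_l` for every `x` in the
fiber `K_l = q⁻¹ {l}`. -/
theorem meanErgodic_iff_fiberwise_cesaro_constant
    {K L : Type*} [TopologicalSpace K] [CompactSpace K] [T2Space K]
    [TopologicalSpace L] [CompactSpace L] [T2Space L]
    (φ : K → K) (hφ : Continuous φ)
    (q : K → L) (hq : Continuous q) (hqsurj : Function.Surjective q)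
    (hmax : ∀ f : C(K, ℂ), (∀ x, f (φ x) = f x) ↔ ∃ g : C(L, ℂ), f = g.comp ⟨q, hq⟩) :
    MeanErgodic φ ↔
      ∀ l : L, ∀ f : C(K, ℂ), ∃ c : ℂ, ∀ x ∈ q ⁻¹' {l},
        Tendsto (fun n : ℕ => (n : ℂ)⁻¹ • ∑ k ∈ Finset.range n, f (φ^[k] x))
          atTop (nhds c) :=
  meanErgodic_iff_fiberwise_cesaro_constant_general φ hφ q hq hmax
end

section
/- Let (K, B, p; φ) be a bundle of topological dynamical systems such that every fiber system (K_b, φ_b) is uniquely ergodic. Then every f ∈ C(K) with f ∘ φ = f is constant on each fiber K_b; equivalently, f = g ∘ p for some g ∈ C(B). Consequently p is (up to a canonical homeomorphism of base spaces) the projection onto the maximal trivial factor of (K, φ). -/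
open MeasureTheory

/-- A topological dynamical system is uniquely ergodic if it admits exactly one invariant
regular Borel probability measure. -/
def UniquelyErgodic {S : Type*} [TopologicalSpace S] (ψ : S → S) : Prop :=
  letI : MeasurableSpace S := borel S
  ∃! μ : Measure S, IsProbabilityMeasure μ ∧ μ.Regular ∧ MeasurePreserving ψ μ μ

/-- The restriction of `φ` to the fiber `p⁻¹ {b}`. -/
def fiberMap {K B : Type*} (φ : K → K) (p : K → B) (hinv : ∀ x, p (φ x) = p x) (b : B)
    (x : ↥(p ⁻¹' {b})) : ↥(p ⁻¹' {b}) :=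
  ⟨φ ↑x, by rw [Set.mem_preimage, Set.mem_singleton_iff, hinv]; exact x.2⟩

/-!
An invariant continuous function `h` is constant along each orbit, so every Cesàro mean of `h`
along the orbit of `x` equals `h x`. Taking a limit of these means along an ultrafilter gives an
invariant positive functional, which Riesz–Markov–Kakutani turns into an invariant regular
probability measure `μₓ` with `∫ h ∂μₓ = h x`. On a uniquely ergodic fiber all the `μₓ` coincide,
so `h` is constant there, and it descends along the closed (hence quotient) map `p`.
-/

open Filter Topology CompactlySupported

theorem norm_birkhoffAverage_le {α E : Type*} (𝕜 : Type*) [RCLike 𝕜] [SeminormedAddCommGroup E]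
    [NormedSpace 𝕜 E] {f : α → α} {g : α → E} {C : ℝ} (hg : ∀ x, ‖g x‖ ≤ C)
    (n : ℕ) (x : α) : ‖birkhoffAverage 𝕜 f g n x‖ ≤ C := by
  rcases eq_or_ne n 0 with rfl | hn
  · simpa using (norm_nonneg _).trans (hg x)
  calc ‖birkhoffAverage 𝕜 f g n x‖ ≤ (n : ℝ)⁻¹ * ∑ k ∈ Finset.range n, ‖g (f^[k] x)‖ := by
        rw [birkhoffAverage, norm_smul, norm_inv, RCLike.norm_natCast, birkhoffSum]
        gcongr
        exact norm_sum_le _ _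
    _ ≤ (n : ℝ)⁻¹ * (n * C) := by
        gcongr
        simpa using Finset.sum_le_sum fun k (_ : k ∈ Finset.range n) => hg (f^[k] x)
    _ = C := by field_simp

theorem birkhoffSum_comp_apply {α M : Type*} [AddCommMonoid M] (f : α → α) (g : α → M) (n : ℕ)
    (x : α) : birkhoffSum f (g ∘ f) n x = birkhoffSum f g n (f x) := by
  simp only [birkhoffSum, Function.comp_apply, ← Function.iterate_succ_apply' f,
    Function.iterate_succ_apply]

theorem birkhoffAverage_comp_apply {α M : Type*} (R : Type*) [DivisionSemiring R]
    [AddCommMonoid M] [Module R M] (f : α → α) (g : α → M) (n : ℕ) (x : α) :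
    birkhoffAverage R f (g ∘ f) n x = birkhoffAverage R f g n (f x) := by
  simp only [birkhoffAverage, birkhoffSum_comp_apply]

section OrbitMean

variable {S : Type*} [TopologicalSpace S] (ψ : S → S) (x₀ : S)

noncomputable def orbitAverage (n : ℕ) : C_c(S, ℝ) →ₗ[ℝ] ℝ where
  toFun g := birkhoffAverage ℝ ψ g n x₀
  map_add' g g' := by simp [birkhoffAverage_add]
  map_smul' c g := by simp [birkhoffAverage, birkhoffSum, Finset.mul_sum, mul_left_comm]

@[simp] theorem orbitAverage_apply (n : ℕ) (g : C_c(S, ℝ)) :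
    orbitAverage ψ x₀ n g = birkhoffAverage ℝ ψ g n x₀ := rfl

theorem exists_tendsto_orbitAverage : ∃ Λ : C_c(S, ℝ) → ℝ,
    Tendsto (fun n g => orbitAverage ψ x₀ n g) (hyperfilter ℕ : Filter ℕ) (𝓝 Λ) := by
  let T : Set (C_c(S, ℝ) → ℝ) :=
    Set.univ.pi fun g => Metric.closedBall 0 ‖g.toBoundedContinuousFunction‖
  have hT : IsCompact T := isCompact_univ_pi fun g => isCompact_closedBall _ _
  have hmem : ∀ n, (fun g => orbitAverage ψ x₀ n g) ∈ T := fun n g _ =>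
    mem_closedBall_zero_iff.2 <|
      norm_birkhoffAverage_le ℝ (g := ⇑g) g.toBoundedContinuousFunction.norm_coe_le_norm n x₀
  obtain ⟨Λ, -, hΛ⟩ :=
    hT.ultrafilter_le_nhds ((hyperfilter ℕ).map fun n g => orbitAverage ψ x₀ n g)
    (by rw [Ultrafilter.coe_map, le_principal_iff]; exact mem_map.2 (univ_mem' hmem))
  exact ⟨Λ, hΛ⟩

/-- `C_c` rather than `C` because that is where Mathlib's Riesz–Markov–Kakutani theorem lives;
on a compact space the two coincide. -/
noncomputable def orbitMean : C_c(S, ℝ) →ₚ[ℝ] ℝ :=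
  PositiveLinearMap.mk₀ (linearMapOfTendsto _ _ (exists_tendsto_orbitAverage ψ x₀).choose_spec)
    fun g hg => ge_of_tendsto (tendsto_pi_nhds.1 (exists_tendsto_orbitAverage ψ x₀).choose_spec g)
      (Eventually.of_forall fun n => by
        simp only [orbitAverage_apply, birkhoffAverage, birkhoffSum, smul_eq_mul]
        exact mul_nonneg (by positivity) (Finset.sum_nonneg fun k _ => hg _))

theorem tendsto_orbitAverage_orbitMean (g : C_c(S, ℝ)) :
    Tendsto (fun n => orbitAverage ψ x₀ n g) (hyperfilter ℕ : Filter ℕ) (𝓝 (orbitMean ψ x₀ g)) :=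
  tendsto_pi_nhds.1 (exists_tendsto_orbitAverage ψ x₀).choose_spec g

theorem orbitMean_eq_of_comp_eq {g : C_c(S, ℝ)} (hg : g ∘ ψ = g) : orbitMean ψ x₀ g = g x₀ := by
  refine tendsto_nhds_unique (tendsto_orbitAverage_orbitMean ψ x₀ g) (tendsto_const_nhds.congr' ?_)
  filter_upwards [(eventually_ne_atTop 0).filter_mono Nat.hyperfilter_le_atTop] with n hn
  rw [orbitAverage_apply, birkhoffAverage_of_comp_eq ℝ hg (Nat.cast_ne_zero.2 hn)]

theorem orbitMean_eq_of_eq_comp {g g' : C_c(S, ℝ)} (h : ⇑g' = g ∘ ψ) :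
    orbitMean ψ x₀ g' = orbitMean ψ x₀ g := by
  have hbdd : Bornology.IsBounded (Set.range g) :=
    (g.hasCompactSupport.isCompact_range g.continuous).isBounded
  have hsub := (tendsto_birkhoffAverage_apply_sub_birkhoffAverage' ℝ hbdd ψ x₀).mono_left
    Nat.hyperfilter_le_atTop
  have := (tendsto_orbitAverage_orbitMean ψ x₀ g).add hsub
  simp only [add_sub_cancel, orbitAverage_apply] at this
  refine tendsto_nhds_unique (tendsto_orbitAverage_orbitMean ψ x₀ g') ?_
  simpa [h, birkhoffAverage_comp_apply] using this

end OrbitMean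

section OrbitMeasure

variable {S : Type*} [TopologicalSpace S] [CompactSpace S] [T2Space S] [MeasurableSpace S]
  [BorelSpace S] (ψ : S → S) (x₀ : S)

noncomputable def orbitMeasure : Measure S := RealRMK.rieszMeasure (orbitMean ψ x₀)

instance : (orbitMeasure ψ x₀).Regular := inferInstanceAs (RealRMK.rieszMeasure _).Regular

theorem integral_orbitMeasure_of_comp_eq {h : C(S, ℝ)} (hh : h ∘ ψ = h) :
    ∫ x, h x ∂orbitMeasure ψ x₀ = h x₀ :=
  (RealRMK.integral_rieszMeasure _ (CompactlySupportedContinuousMap.continuousMapEquiv h)).trans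
    (orbitMean_eq_of_comp_eq ψ x₀ hh)

instance : IsProbabilityMeasure (orbitMeasure ψ x₀) := by
  have h := integral_orbitMeasure_of_comp_eq ψ x₀ (h := 1) rfl
  simp only [ContinuousMap.one_apply, integral_const, smul_eq_mul, mul_one] at h
  exact ⟨(ENNReal.toReal_eq_one_iff _).1 h⟩

theorem measurePreserving_orbitMeasure (hψ : Continuous ψ) :
    MeasurePreserving ψ (orbitMeasure ψ x₀) (orbitMeasure ψ x₀) := by
  refine ⟨hψ.measurable, ?_⟩
  have : Measure.InnerRegularCompactLTTop ((orbitMeasure ψ x₀).map ψ) :=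
    Measure.InnerRegularCompactLTTop.map_of_continuous hψ
  refine Measure.ext_of_integral_eq_on_compactlySupported fun g => ?_
  rw [integral_map hψ.aemeasurable (g.continuous.aestronglyMeasurable (f := ⇑g))]
  let g' := CompactlySupportedContinuousMap.continuousMapEquiv (g.toContinuousMap.comp ⟨ψ, hψ⟩)
  calc ∫ x, g' x ∂orbitMeasure ψ x₀ = orbitMean ψ x₀ g' := RealRMK.integral_rieszMeasure _ g'
    _ = orbitMean ψ x₀ g := orbitMean_eq_of_eq_comp ψ x₀ rfl
    _ = ∫ x, g x ∂orbitMeasure ψ x₀ := (RealRMK.integral_rieszMeasure _ g).symm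

end OrbitMeasure

theorem UniquelyErgodic.apply_eq_of_comp_eq {S : Type*} [TopologicalSpace S] [CompactSpace S]
    [T2Space S] {ψ : S → S} (hue : UniquelyErgodic ψ) (hψ : Continuous ψ) {h : C(S, ℝ)}
    (hh : h ∘ ψ = h) (x y : S) : h x = h y := by
  let : MeasurableSpace S := borel S
  have : BorelSpace S := ⟨rfl⟩
  obtain ⟨μ, -, hμ⟩ := hue
  have horbit (z : S) : orbitMeasure ψ z = μ :=
    hμ _ ⟨inferInstance, inferInstance, measurePreserving_orbitMeasure ψ z hψ⟩
  rw [← integral_orbitMeasure_of_comp_eq ψ x hh, ← integral_orbitMeasure_of_comp_eq ψ y hh,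
    horbit, horbit]

theorem continuous_fiberMap {K B : Type*} [TopologicalSpace K] {φ : K → K} (hφ : Continuous φ)
    (p : K → B) (hinv : ∀ x, p (φ x) = p x) (b : B) : Continuous (fiberMap φ p hinv b) :=
  (hφ.comp continuous_subtype_val).subtype_mk _

theorem apply_eq_of_uniquelyErgodic_fiberMap {K B : Type*} [TopologicalSpace K] [CompactSpace K]
    [T2Space K] [TopologicalSpace B] [T1Space B] {φ : K → K} (hφ : Continuous φ) {p : K → B}
    (hp : Continuous p) {hinv : ∀ x, p (φ x) = p x} {b : B}
    (hue : UniquelyErgodic (fiberMap φ p hinv b)) {f : C(K, ℂ)} (hf : ∀ x, f (φ x) = f x)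
    (x y : p ⁻¹' {b}) : f x = f y := by
  have : CompactSpace (p ⁻¹' {b}) :=
    isCompact_iff_compactSpace.1 (isClosed_singleton.preimage hp).isCompact
  have hpart (g : C(ℂ, ℝ)) : g (f x) = g (f y) :=
    hue.apply_eq_of_comp_eq (continuous_fiberMap hφ p hinv b) (h := (g.comp f).restrict _)
      (funext fun z => congrArg g (hf z)) x y
  exact Complex.ext (hpart ⟨Complex.re, Complex.continuous_re⟩)
    (hpart ⟨Complex.im, Complex.continuous_im⟩)

theorem fixed_functions_factor_of_uniquelyErgodic_fibers_general
    {K B : Type*} [TopologicalSpace K] [CompactSpace K] [T2Space K]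
    [TopologicalSpace B] [T2Space B]
    (φ : K → K) (hφ : Continuous φ)
    (p : K → B) (hp : Continuous p) (hpsurj : Function.Surjective p)
    (hinv : ∀ x, p (φ x) = p x)
    (hue : ∀ b : B, UniquelyErgodic (fiberMap φ p hinv b)) :
    (∀ f : C(K, ℂ), (∀ x, f (φ x) = f x) →
        (∀ x y : K, p x = p y → f x = f y)) ∧
      (∀ f : C(K, ℂ), (∀ x, f (φ x) = f x) ↔ ∃ g : C(B, ℂ), f = g.comp ⟨p, hp⟩) := by
  have hconst (f : C(K, ℂ)) (hf : ∀ x, f (φ x) = f x) (x y : K) (hxy : p x = p y) :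
      f x = f y :=
    apply_eq_of_uniquelyErgodic_fiberMap hφ hp (hue (p x)) hf ⟨x, rfl⟩ ⟨y, hxy.symm⟩
  have hquot : IsQuotientMap (⟨p, hp⟩ : C(K, B)) := hp.isClosedMap.isQuotientMap hp hpsurj
  refine ⟨hconst, fun f => ⟨fun hf => ?_, ?_⟩⟩
  · exact ⟨hquot.lift f fun x y => hconst f hf x y, (hquot.lift_comp f _).symm⟩
  · rintro ⟨g, rfl⟩ x
    exact congrArg g (hinv x)

/-- Let `(K, B, p; φ)` be a bundle of topological dynamical systems with all
fiber systems `(K_b, φ_b)` uniquely ergodic.  Then every `f ∈ C(K)` with `f ∘ φ = f` is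
constant on each fiber, equivalently of the form `g ∘ p` with `g ∈ C(B)`; consequently
`{g ∘ p : g ∈ C(B)} = fix(T_φ)`, i.e. `p` is the projection onto the maximal trivial factor
of `(K, φ)`. -/
theorem fixed_functions_factor_of_uniquelyErgodic_fibers
    {K B : Type*} [TopologicalSpace K] [CompactSpace K] [T2Space K]
    [TopologicalSpace B] [CompactSpace B] [T2Space B]
    (φ : K → K) (hφ : Continuous φ)
    (p : K → B) (hp : Continuous p) (hpsurj : Function.Surjective p)
    (hinv : ∀ x, p (φ x) = p x)
    (hue : ∀ b : B, UniquelyErgodic (fiberMap φ p hinv b)) :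
    (∀ f : C(K, ℂ), (∀ x, f (φ x) = f x) →
        (∀ x y : K, p x = p y → f x = f y)) ∧
      (∀ f : C(K, ℂ), (∀ x, f (φ x) = f x) ↔ ∃ g : C(B, ℂ), f = g.comp ⟨p, hp⟩) :=
  fixed_functions_factor_of_uniquelyErgodic_fibers_general φ hφ p hp hpsurj hinv hue
end

section
/- Let X be a locally compact Hausdorff space, Y a Hausdorff uniform space, B a compact Hausdorff space, and F : B → 𝒫(X) a set-valued map that is lower-semicontinuous at every point of B. Endow C(X, Y) with the topology of uniform convergence on compact sets and let A ⊆ C(X, Y) be compact. Define the equivalence relation ∼_F on C(X, Y) × B by (f, b) ∼_F (g, b') iff b = b' and f agrees with g on F(b). Then the restriction of ∼_F to A × B is a closed subset of (A × B) × (A × B), and consequently the quotient space (A × B)/∼_F is compact Hausdorff. -/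
/-- A set-valued map `F : B → 𝒫(X)` is lower-semicontinuous at every point if for each
`b ∈ B` and each open `U ⊆ X` meeting `F b` there is a neighborhood `V` of `b` such that
`F b'` meets `U` for all `b' ∈ V`. -/
def LowerSemicontinuousSetMap {B X : Type*} [TopologicalSpace B] [TopologicalSpace X]
    (F : B → Set X) : Prop :=
  ∀ b : B, ∀ U : Set X, IsOpen U → (F b ∩ U).Nonempty →
    ∀ᶠ b' in nhds b, (F b' ∩ U).Nonempty

/-! Agreement of `f` and `g` on `F b` means that every `x ∈ F b` lies in the closed set
`{x | f x = g x}`, which varies jointly continuously with `(f, g)` because evaluation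
`C(X, Y) × X → Y` is continuous for locally compact `X`.  Lower semicontinuity of `F` is exactly
what makes "every point of `F b` lies in a closed set" a closed condition in `b`.  A closed
equivalence relation on a compact space has a proper quotient map (the saturation of a closed set
is its projection along a compact factor), and the quotient of a compact space by such a relation
is Hausdorff, since `q × q` is again a quotient map and pulls the diagonal back to the relation. -/

open Set Topology

theorem LowerSemicontinuousSetMap.isClosed_setOf_forall_mem
    {P B X : Type*} [TopologicalSpace P] [TopologicalSpace B] [TopologicalSpace X]
    {F : B → Set X} (hF : LowerSemicontinuousSetMap F) {C : Set (P × X)} (hC : IsClosed C) :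
    IsClosed {q : P × B | ∀ x ∈ F q.2, (q.1, x) ∈ C} := by
  rw [← isOpen_compl_iff, isOpen_iff_mem_nhds]
  rintro ⟨p, b⟩ hpb
  obtain ⟨x, hxF, hpx⟩ : ∃ x ∈ F b, (p, x) ∈ Cᶜ := by simpa using hpb
  obtain ⟨U, W, hU, hW, hpU, hxW, hUW⟩ := isOpen_prod_iff.mp hC.isOpen_compl p x hpx
  filter_upwards [prod_mem_nhds (hU.mem_nhds hpU) (hF b W hW ⟨x, hxF, hxW⟩)]
  rintro ⟨p', b'⟩ ⟨hp'U, x', hx'F, hx'W⟩ hall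
  exact hUW (mk_mem_prod hp'U hx'W) (hall x' hx'F)

theorem LowerSemicontinuousSetMap.isClosed_setOf_eqOn
    {X Y B : Type*} [TopologicalSpace X] [LocallyCompactSpace X]
    [TopologicalSpace Y] [T2Space Y] [TopologicalSpace B]
    {F : B → Set X} (hF : LowerSemicontinuousSetMap F) :
    IsClosed {q : (C(X, Y) × C(X, Y)) × B | EqOn q.1.1 q.1.2 (F q.2)} :=
  hF.isClosed_setOf_forall_mem <|
    isClosed_eq (f := fun q : (C(X, Y) × C(X, Y)) × X => q.1.1 q.2) (g := fun q => q.1.2 q.2)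
      (by fun_prop) (by fun_prop)

namespace Setoid

variable {α : Type*} [TopologicalSpace α] [CompactSpace α] {s : Setoid α}

theorem isClosedMap_quotient_mk (hs : IsClosed {z : α × α | s z.1 z.2}) :
    IsClosedMap (Quotient.mk s) := by
  intro C hC
  have hsat : Quotient.mk s ⁻¹' (Quotient.mk s '' C) =
      Prod.fst '' ({z : α × α | s z.1 z.2} ∩ univ ×ˢ C) := by
    ext a
    constructor
    · rintro ⟨c, hc, hca⟩
      exact ⟨(a, c), ⟨s.symm (Quotient.exact hca), trivial, hc⟩, rfl⟩
    · rintro ⟨⟨a, c⟩, ⟨hac, -, hc⟩, rfl⟩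
      exact ⟨c, hc, (Quotient.sound hac).symm⟩
  exact isQuotientMap_quotient_mk'.isClosed_preimage.mp <|
    hsat ▸ isClosedMap_fst_of_compactSpace _ (hs.inter (isClosed_univ.prod hC))

theorem isProperMap_quotient_mk (hs : IsClosed {z : α × α | s z.1 z.2}) :
    IsProperMap (Quotient.mk s) := by
  refine isProperMap_iff_isClosedMap_and_compact_fibers.mpr
    ⟨continuous_quotient_mk', isClosedMap_quotient_mk hs, ?_⟩
  refine Quotient.ind fun a => ?_
  have hfiber :
      Quotient.mk s ⁻¹' {⟦a⟧} = (fun z => (z, a)) ⁻¹' {z : α × α | s z.1 z.2} := by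
    ext z
    exact Quotient.eq
  rw [hfiber]
  exact (hs.preimage (by fun_prop)).isCompact

theorem t2Space_quotient (hs : IsClosed {z : α × α | s z.1 z.2}) : T2Space (Quotient s) := by
  have hq := isProperMap_quotient_mk hs
  have hqq : IsQuotientMap (Prod.map (Quotient.mk s) (Quotient.mk s)) :=
    (hq.prodMap hq).isClosedMap.isQuotientMap (by fun_prop)
      (Quotient.mk_surjective.prodMap Quotient.mk_surjective)
  rw [t2_iff_isClosed_diagonal, ← hqq.isClosed_preimage]
  convert hs using 1
  ext z
  exact Quotient.eq

end Setoid

theorem quotient_by_fiber_agreement_compact_general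
    {X Y B : Type*} [TopologicalSpace X] [LocallyCompactSpace X]
    [UniformSpace Y] [T2Space Y]
    [TopologicalSpace B] [CompactSpace B] [T2Space B]
    (F : B → Set X) (hF : LowerSemicontinuousSetMap F)
    (A : Set C(X, Y)) (hA : IsCompact A) :
    IsClosed {z : (↥A × B) × (↥A × B) |
        z.1.2 = z.2.2 ∧ Set.EqOn (↑z.1.1 : X → Y) (↑z.2.1 : X → Y) (F z.1.2)} ∧
      ∀ s : Setoid (↥A × B),
        (∀ a b : ↥A × B, s.r a b ↔
          (a.2 = b.2 ∧ Set.EqOn (↑a.1 : X → Y) (↑b.1 : X → Y) (F a.2))) →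
        CompactSpace (Quotient s) ∧ T2Space (Quotient s) := by
  have : CompactSpace A := isCompact_iff_compactSpace.mp hA
  have hclosed : IsClosed {z : (↥A × B) × (↥A × B) |
      z.1.2 = z.2.2 ∧ Set.EqOn (↑z.1.1 : X → Y) (↑z.2.1 : X → Y) (F z.1.2)} :=
    (isClosed_eq (by fun_prop) (by fun_prop)).inter <| hF.isClosed_setOf_eqOn.preimage
      (f := fun z : (↥A × B) × (↥A × B) => ((z.1.1.1, z.2.1.1), z.1.2)) (by fun_prop)
  refine ⟨hclosed, fun s hs => ⟨inferInstance, Setoid.t2Space_quotient ?_⟩⟩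
  convert hclosed using 1
  ext z
  exact hs z.1 z.2

/-- Let `X` be a locally compact Hausdorff space, `Y` a Hausdorff uniform
space, `B` a compact Hausdorff space and `F : B → 𝒫(X)` lower-semicontinuous.  Endow
`C(X, Y)` with the topology of uniform convergence on compact sets (the compact-open
topology) and let `A ⊆ C(X, Y)` be compact.  Then the relation
`(f, b) ∼_F (g, b') ↔ b = b' ∧ f = g on F b` restricted to `A × B` is closed, and the
quotient `(A × B) / ∼_F` is compact Hausdorff. -/
theorem quotient_by_fiber_agreement_compact
    {X Y B : Type*} [TopologicalSpace X] [LocallyCompactSpace X] [T2Space X]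
    [UniformSpace Y] [T2Space Y]
    [TopologicalSpace B] [CompactSpace B] [T2Space B]
    (F : B → Set X) (hF : LowerSemicontinuousSetMap F)
    (A : Set C(X, Y)) (hA : IsCompact A) :
    IsClosed {z : (↥A × B) × (↥A × B) |
        z.1.2 = z.2.2 ∧ Set.EqOn (↑z.1.1 : X → Y) (↑z.2.1 : X → Y) (F z.1.2)} ∧
      ∀ s : Setoid (↥A × B),
        (∀ a b : ↥A × B, s.r a b ↔
          (a.2 = b.2 ∧ Set.EqOn (↑a.1 : X → Y) (↑b.1 : X → Y) (F a.2))) →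
        CompactSpace (Quotient s) ∧ T2Space (Quotient s) :=
  quotient_by_fiber_agreement_compact_general F hF A hA
end

section
/- Let (K, B, p; φ) be a bundle of topological dynamical systems such that (K, φ) is equicontinuous and p is an open map. Define the equivalence relation ∼ on E(K, φ) × B by (ψ, b) ∼ (ψ', b') iff b = b' and ψ agrees with ψ' on the fiber K_b. Then ∼ is a closed relation and the quotient space (E(K, φ) × B)/∼ (which is the underlying space of the Ellis semigroup bundle of (K, B, p; φ)) is compact Hausdorff. -/
/-!
Equicontinuity passes to the pointwise closure `E(K, φ)` and makes the evaluation
`(ψ, x) ↦ ψ x` jointly continuous on `E(K, φ) × K`, so pairs of maps agreeing at a point form a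
closed set. Two maps disagree somewhere on the fiber `K_b` iff `b` lies in the image of an open
set under `id × p`, which is open because `p` is; hence `∼` is closed. Finally, the quotient of
the compact Hausdorff space `E(K, φ) × B` by a closed equivalence relation is compact Hausdorff:
the quotient map is closed, so disjoint closed classes have disjoint saturated neighbourhoods.
-/

open Topology Filter Uniformity

/-- The Ellis semigroup of a topological dynamical system: the closure of `{φ^n : n ∈ ℕ}` in
`K → K` with the product (pointwise-convergence) topology. -/
def Ellis {K : Type*} [TopologicalSpace K] (φ : K → K) : Set (K → K) :=
  closure {ψ : K → K | ∃ n : ℕ, ψ = φ^[n]}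

theorem IsClosedMap.t2Space_of_surjective {X Y : Type*} [TopologicalSpace X] [NormalSpace X]
    [TopologicalSpace Y] {f : X → Y} (hf : IsClosedMap f) (hcont : Continuous f)
    (hsurj : Function.Surjective f) (hfib : ∀ y, IsClosed (f ⁻¹' {y})) : T2Space Y :=
  t2Space_iff_disjoint_nhds.2 fun y y' hne => by
    change Disjoint (𝓝 y) (𝓝 y')
    rw [← disjoint_comap_iff hsurj, hf.comap_nhds_eq hcont, hf.comap_nhds_eq hcont]
    exact disjoint_nhdsSet_nhdsSet (hfib y) (hfib y') ((Set.disjoint_singleton.2 hne).preimage f)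

theorem isClosedMap_quotient_mk_of_isClosed_rel {X : Type*} [TopologicalSpace X] [CompactSpace X]
    {s : Setoid X} (hR : IsClosed {z : X × X | s z.1 z.2}) : IsClosedMap (Quotient.mk s) := by
  intro C hC
  have hsat : Quotient.mk s ⁻¹' (Quotient.mk s '' C) =
      Prod.fst '' ({z : X × X | s z.1 z.2} ∩ Set.univ ×ˢ C) := by
    ext x
    simp [Quotient.eq, s.comm, and_comm]
  exact isQuotientMap_quotient_mk'.isClosed_preimage.1
    (hsat ▸ isClosedMap_fst_of_compactSpace _ (hR.inter (isClosed_univ.prod hC)))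

theorem t2Space_quotient_of_isClosed_rel {X : Type*} [TopologicalSpace X] [CompactSpace X]
    [NormalSpace X] (s : Setoid X) (hR : IsClosed {z : X × X | s z.1 z.2}) :
    T2Space (Quotient s) := by
  refine (isClosedMap_quotient_mk_of_isClosed_rel hR).t2Space_of_surjective
    continuous_quotient_mk' Quotient.mk_surjective fun y => ?_
  obtain ⟨x, rfl⟩ := Quotient.mk_surjective y
  have hfib : Quotient.mk s ⁻¹' {Quotient.mk s x} = {z | s z x} := by
    ext z
    simp [Quotient.eq]
  rw [hfib]
  exact hR.preimage (continuous_id.prodMk continuous_const)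

theorem Set.Equicontinuous.continuous_eval {X α : Type*} [TopologicalSpace X] [UniformSpace α]
    {A : Set (X → α)} (hA : A.Equicontinuous) :
    Continuous fun q : A × X => (q.1 : X → α) q.2 := by
  refine continuous_iff_continuousAt.2 fun ⟨f₀, x₀⟩ => ?_
  rw [ContinuousAt, Uniform.tendsto_nhds_right]
  have hf : Tendsto (fun q : A × X => ((f₀ : X → α) x₀, (q.1 : X → α) x₀)) (𝓝 (f₀, x₀)) (𝓤 α) :=
    Uniform.tendsto_nhds_right.1
      (((continuous_apply x₀).comp (continuous_subtype_val.comp continuous_fst)).tendsto _)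
  have hx : Tendsto (fun q : A × X => ((q.1 : X → α) x₀, (q.1 : X → α) q.2)) (𝓝 (f₀, x₀)) (𝓤 α) :=
    fun V hV => ((continuous_snd.tendsto (f₀, x₀)).eventually (hA x₀ V hV)).mono fun q hq => hq q.1
  exact hf.uniformity_trans hx

theorem IsOpenMap.isClosed_setOf_forall_fiber {X K B : Type*} [TopologicalSpace X]
    [TopologicalSpace K] [TopologicalSpace B] {p : K → B} (hp : IsOpenMap p) {S : Set (X × K)}
    (hS : IsClosed S) : IsClosed {q : X × B | ∀ y, p y = q.2 → (q.1, y) ∈ S} := by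
  rw [← isOpen_compl_iff]
  convert (IsOpenMap.id.prodMap hp) _ hS.isOpen_compl
  ext ⟨x, b⟩
  simp [and_comm]

theorem isClosed_setOf_eqOn_fiber {K α B : Type*} [TopologicalSpace K] [UniformSpace α]
    [T2Space α] [TopologicalSpace B] [T2Space B] {A : Set (K → α)} (hA : A.Equicontinuous)
    {p : K → B} (hp : IsOpenMap p) :
    IsClosed {z : (A × B) × (A × B) |
      z.1.2 = z.2.2 ∧ Set.EqOn (z.1.1 : K → α) (z.2.1 : K → α) (p ⁻¹' {z.1.2})} := by
  have hagree : IsClosed {q : (A × A) × K | (q.1.1 : K → α) q.2 = (q.1.2 : K → α) q.2} :=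
    isClosed_eq (hA.continuous_eval.comp (continuous_fst.fst.prodMk continuous_snd))
      (hA.continuous_eval.comp (continuous_fst.snd.prodMk continuous_snd))
  exact (isClosed_eq continuous_fst.snd continuous_snd.snd).inter
    ((hp.isClosed_setOf_forall_fiber hagree).preimage
      ((continuous_fst.fst.prodMk continuous_snd.fst).prodMk continuous_fst.snd))

theorem ellis_eq_closure_range {K : Type*} [TopologicalSpace K] (φ : K → K) :
    Ellis φ = closure (Set.range fun n : ℕ => φ^[n]) := by
  simp only [Ellis, Set.range, eq_comm]

instance compactSpace_ellis {K : Type*} [TopologicalSpace K] [CompactSpace K] (φ : K → K) :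
    CompactSpace (Ellis φ) :=
  isCompact_iff_compactSpace.mp isClosed_closure.isCompact

theorem equicontinuous_ellis {K : Type*} [UniformSpace K] {φ : K → K}
    (h : Equicontinuous fun n : ℕ => φ^[n]) : (Ellis φ).Equicontinuous := by
  rw [ellis_eq_closure_range]
  exact Set.Equicontinuous.closure (equicontinuous_iff_range.1 h)

theorem ellisBundle_compact_general
    {K B : Type*} [UniformSpace K] [CompactSpace K] [T2Space K]
    [TopologicalSpace B] [CompactSpace B] [T2Space B]
    (φ : K → K)
    (p : K → B)
    (hequi : UniformEquicontinuous fun n : ℕ => φ^[n])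
    (hopen : IsOpenMap p) :
    IsClosed {z : (↥(Ellis φ) × B) × (↥(Ellis φ) × B) |
        z.1.2 = z.2.2 ∧
          Set.EqOn (↑z.1.1 : K → K) (↑z.2.1 : K → K) (p ⁻¹' {z.1.2})} ∧
      ∀ s : Setoid (↥(Ellis φ) × B),
        (∀ a b : ↥(Ellis φ) × B, s.r a b ↔
          (a.2 = b.2 ∧ Set.EqOn (↑a.1 : K → K) (↑b.1 : K → K) (p ⁻¹' {a.2}))) →
        CompactSpace (Quotient s) ∧ T2Space (Quotient s) := by
  have hR := isClosed_setOf_eqOn_fiber (equicontinuous_ellis hequi.equicontinuous) hopen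
  refine ⟨hR, fun s hs => ⟨inferInstance, t2Space_quotient_of_isClosed_rel s ?_⟩⟩
  simpa only [← hs] using hR

/-- Let `(K, B, p; φ)` be a bundle of topological dynamical systems with
`(K, φ)` equicontinuous and `p` an open map.  Then the relation on `E(K, φ) × B` given by
`(ψ, b) ∼ (ψ', b') ↔ b = b' ∧ ψ = ψ' on K_b` is closed and the quotient
`(E(K, φ) × B) / ∼` (the underlying space of the Ellis semigroup bundle) is compact
Hausdorff. -/
theorem ellisBundle_compact
    {K B : Type*} [UniformSpace K] [CompactSpace K] [T2Space K]
    [TopologicalSpace B] [CompactSpace B] [T2Space B]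
    (φ : K → K) (hφ : Continuous φ)
    (p : K → B) (hp : Continuous p) (hpsurj : Function.Surjective p)
    (hinv : ∀ x, p (φ x) = p x)
    (hequi : UniformEquicontinuous fun n : ℕ => φ^[n])
    (hopen : IsOpenMap p) :
    IsClosed {z : (↥(Ellis φ) × B) × (↥(Ellis φ) × B) |
        z.1.2 = z.2.2 ∧
          Set.EqOn (↑z.1.1 : K → K) (↑z.2.1 : K → K) (p ⁻¹' {z.1.2})} ∧
      ∀ s : Setoid (↥(Ellis φ) × B),
        (∀ a b : ↥(Ellis φ) × B, s.r a b ↔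
          (a.2 = b.2 ∧ Set.EqOn (↑a.1 : K → K) (↑b.1 : K → K) (p ⁻¹' {a.2}))) →
        CompactSpace (Quotient s) ∧ T2Space (Quotient s) :=
  ellisBundle_compact_general φ p hequi hopen
end

section
/- Let (K, B, p; φ) be a bundle of topological dynamical systems such that (K, φ) is equicontinuous and every fiber system (K_b, φ_b) is minimal. Then p is an open map. -/
/-! Let `C` be the closed invariant set of points whose forward orbit never enters the open
set `O`. A fiber meeting `C` is, by minimality, contained in `C` and so misses `O`; a fiber
missing `C` has a point with an iterate in `O`, hence meets `O`, since `p` is constant on orbits.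
Thus `p '' O` is the complement of the compact set `p '' C`. -/

/-- A topological dynamical system `(S, ψ)` is minimal if it has no nonempty proper closed
invariant subset. -/
def IsMinimalSystem {S : Type*} [TopologicalSpace S] (ψ : S → S) : Prop :=
  ∀ C : Set S, IsClosed C → Set.MapsTo ψ C C → C.Nonempty → C = Set.univ

section

variable {K B : Type*} {φ : K → K} {p : K → B}

theorem mapsTo_iInter_preimage_iterate (s : Set K) :
    Set.MapsTo φ (⋂ n : ℕ, φ^[n] ⁻¹' s) (⋂ n : ℕ, φ^[n] ⁻¹' s) := by
  intro x hx
  simp only [Set.mem_iInter, Set.mem_preimage] at hx ⊢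
  intro n
  simpa only [Function.iterate_succ_apply] using hx (n + 1)

theorem isClosed_iInter_preimage_iterate [TopologicalSpace K] (hφ : Continuous φ) {s : Set K}
    (hs : IsClosed s) : IsClosed (⋂ n : ℕ, φ^[n] ⁻¹' s) :=
  isClosed_iInter fun n => hs.preimage (hφ.iterate n)

theorem fiber_subset_of_isMinimalSystem [TopologicalSpace K] (hinv : ∀ x, p (φ x) = p x)
    {b : B} (hmin : IsMinimalSystem (fiberMap φ p hinv b)) {C : Set K} (hC : IsClosed C)
    (hφC : Set.MapsTo φ C C) (hCb : (C ∩ p ⁻¹' {b}).Nonempty) : p ⁻¹' {b} ⊆ C := by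
  obtain ⟨y, hyC, hyb⟩ := hCb
  have hD : ((↑) ⁻¹' C : Set ↥(p ⁻¹' {b})) = Set.univ :=
    hmin _ (hC.preimage continuous_subtype_val) (fun z hz => hφC hz) ⟨⟨y, hyb⟩, hyC⟩
  intro x hxb
  exact (Set.ext_iff.mp hD ⟨x, hxb⟩).mpr trivial

theorem image_eq_compl_image_iInter_preimage_iterate_compl [TopologicalSpace K]
    (hφ : Continuous φ) (hpsurj : Function.Surjective p) (hinv : ∀ x, p (φ x) = p x)
    (hmin : ∀ b : B, IsMinimalSystem (fiberMap φ p hinv b)) {O : Set K} (hO : IsOpen O) :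
    p '' O = (p '' ⋂ n : ℕ, φ^[n] ⁻¹' Oᶜ)ᶜ := by
  have hC := isClosed_iInter_preimage_iterate hφ hO.isClosed_compl
  ext b
  constructor
  · rintro ⟨x, hxO, rfl⟩ ⟨y, hyC, hyb⟩
    have hxC := fiber_subset_of_isMinimalSystem hinv (hmin (p x)) hC
      (mapsTo_iInter_preimage_iterate _) ⟨y, hyC, hyb⟩ rfl
    exact Set.mem_iInter.mp hxC 0 hxO
  · intro hb
    obtain ⟨y, rfl⟩ := hpsurj b
    obtain ⟨n, hn⟩ : ∃ n, φ^[n] y ∈ O := by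
      by_contra! h
      exact hb ⟨y, Set.mem_iInter.mpr h, rfl⟩
    exact ⟨φ^[n] y, hn, congrFun (Function.iterate_invariant (funext hinv) n) y⟩

end

theorem bundle_projection_isOpenMap_of_minimal_fibers_general
    {K B : Type*} [UniformSpace K] [CompactSpace K]
    [TopologicalSpace B] [T2Space B]
    (φ : K → K) (hφ : Continuous φ)
    (p : K → B) (hp : Continuous p) (hpsurj : Function.Surjective p)
    (hinv : ∀ x, p (φ x) = p x)
    (hmin : ∀ b : B, IsMinimalSystem (fiberMap φ p hinv b)) :
    IsOpenMap p := by
  intro O hO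
  rw [image_eq_compl_image_iInter_preimage_iterate_compl hφ hpsurj hinv hmin hO]
  have hC := isClosed_iInter_preimage_iterate hφ hO.isClosed_compl
  exact (hC.isCompact.image hp).isClosed.isOpen_compl

/-- Let `(K, B, p; φ)` be a bundle of topological dynamical systems such
that `(K, φ)` is equicontinuous and every fiber system `(K_b, φ_b)` is minimal.  Then `p` is
an open map. -/
theorem bundle_projection_isOpenMap_of_minimal_fibers
    {K B : Type*} [UniformSpace K] [CompactSpace K] [T2Space K]
    [TopologicalSpace B] [CompactSpace B] [T2Space B]
    (φ : K → K) (hφ : Continuous φ)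
    (p : K → B) (hp : Continuous p) (hpsurj : Function.Surjective p)
    (hinv : ∀ x, p (φ x) = p x)
    (hequi : UniformEquicontinuous fun n : ℕ => φ^[n])
    (hmin : ∀ b : B, IsMinimalSystem (fiberMap φ p hinv b)) :
    IsOpenMap p :=
  bundle_projection_isOpenMap_of_minimal_fibers_general φ hφ p hp hpsurj hinv hmin
end

section
/- Let (K, φ) be a topological dynamical system with discrete spectrum. Then the Ellis semigroup E(K, φ) is a compact subset of K^K consisting of homeomorphisms of K, and under composition it is a commutative topological group: composition E(K, φ) × E(K, φ) → E(K, φ) is jointly continuous, each element has an inverse in E(K, φ), and inversion is continuous. -/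
/-- A topological dynamical system has discrete spectrum if the linear span of the
eigenvectors of its Koopman operator with unimodular eigenvalues is dense in `C(K)`. -/
def DiscreteSpectrum {K : Type*} [TopologicalSpace K] (φ : K → K) : Prop :=
  Dense (↑(Submodule.span ℂ
    {f : C(K, ℂ) | f ≠ 0 ∧ ∃ lam : ℂ, ‖lam‖ = 1 ∧ ∀ x, f (φ x) = lam * f x}) :
      Set C(K, ℂ))

/-!
Each `ψ ∈ E(K, φ)` multiplies every unimodular eigenfunction `f` by a unimodular constant (a
pointwise limit of powers of its eigenvalue), so `{f ∘ ψ | ψ ∈ E}` is equicontinuous; this passes to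
the span of the eigenfunctions and, by density, to every `g ∈ C(K)`. As `K` embeds into `ℂ^C(K)`,
evaluation `E × K → K` is then jointly continuous: elements of `E` are continuous, and composition
on `E` is jointly continuous and commutative. Eigenfunctions separate points, so elements of `E` are
injective and `id` is their only idempotent; an idempotent of the compact semigroup `ψ ∘ E`
(Ellis–Numakura) therefore gives an inverse of `ψ`. Inversion has closed graph in the compact space
`E`, hence is continuous.
-/

open Filter Topology Uniformity Set Function

section TestFunctions

variable {X K : Type*} [TopologicalSpace X] [TopologicalSpace K] [CompactSpace K] [T2Space K]

theorem isClosedEmbedding_eval_continuousMap :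
    IsClosedEmbedding (fun (x : K) (g : C(K, ℂ)) => g x) := by
  refine Continuous.isClosedEmbedding (continuous_pi fun g => g.continuous) fun x y hxy => ?_
  by_contra hne
  obtain ⟨g, hg, hgxy⟩ := separatesPoints_continuous_of_t35Space hne
  exact hgxy (Complex.ofReal_injective (congrFun hxy ⟨_, Complex.continuous_ofReal.comp hg⟩))

theorem continuous_of_forall_continuousMap_comp {f : X → K}
    (hf : ∀ g : C(K, ℂ), Continuous (g ∘ f)) : Continuous f :=
  isClosedEmbedding_eval_continuousMap.continuous_iff.2 (continuous_pi hf)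

end TestFunctions

section Equicontinuity

variable {ι X α : Type*} [TopologicalSpace X]

theorem UniformContinuous.comp_equicontinuous [UniformSpace α] {β : Type*} [UniformSpace β]
    {g : α → β} (hg : UniformContinuous g) {F : ι → X → α} (hF : Equicontinuous F) :
    Equicontinuous fun i => g ∘ F i :=
  fun x₀ _ hU => hF x₀ _ (hg hU)

theorem Equicontinuous.add [UniformSpace α] [AddGroup α] [IsUniformAddGroup α]
    {F G : ι → X → α} (hF : Equicontinuous F) (hG : Equicontinuous G) :
    Equicontinuous (F + G) := by
  rw [equicontinuous_iff_continuous] at *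
  exact hF.add hG

theorem equicontinuous_isometry_comp [PseudoMetricSpace α] {u : ι → α → α}
    (hu : ∀ i, Isometry (u i)) {f : X → α} (hf : Continuous f) :
    Equicontinuous fun i => u i ∘ f := by
  intro x₀
  rw [Metric.equicontinuousAt_iff_right]
  intro ε hε
  filter_upwards [Metric.tendsto_nhds.1 (hf.tendsto x₀) ε hε] with x hx i
  rw [comp_apply, comp_apply, (hu i).dist_eq, dist_comm]
  exact hx

theorem equicontinuous_comp_of_uniform_approx {Y : Type*} [PseudoMetricSpace α]
    {F : ι → X → Y} {g : Y → α}
    (happrox : ∀ ε > 0, ∃ h : Y → α, (∀ y, dist (g y) (h y) < ε) ∧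
      Equicontinuous fun i => h ∘ F i) :
    Equicontinuous fun i => g ∘ F i := by
  intro x₀
  rw [Metric.equicontinuousAt_iff_right]
  intro ε hε
  obtain ⟨h, hgh, hh⟩ := happrox (ε / 3) (by positivity)
  filter_upwards [Metric.equicontinuousAt_iff_right.1 (hh x₀) (ε / 3) (by positivity)]
    with x hx i
  calc dist (g (F i x₀)) (g (F i x))
      ≤ dist (g (F i x₀)) (h (F i x₀)) + dist (h (F i x₀)) (h (F i x))
        + dist (h (F i x)) (g (F i x)) := dist_triangle4 _ _ _ _
    _ < ε / 3 + ε / 3 + ε / 3 := by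
        gcongr
        · exact hgh _
        · exact hx i
        · rw [dist_comm]; exact hgh _
    _ = ε := by ring

theorem Equicontinuous.continuous_uncurry [TopologicalSpace ι] [UniformSpace α]
    {F : ι → X → α} (hF : Equicontinuous F) (hcont : ∀ x, Continuous fun i => F i x) :
    Continuous (uncurry F) := by
  rw [continuous_iff_continuousAt]
  rintro ⟨i₀, x₀⟩
  rw [ContinuousAt, Uniform.tendsto_nhds_right]
  have hfst : Tendsto (fun p : ι × X => (F i₀ x₀, F p.1 x₀)) (𝓝 (i₀, x₀)) (𝓤 α) :=
    Uniform.tendsto_nhds_right.1 ((hcont x₀).continuousAt.comp continuousAt_fst)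
  have hsnd : Tendsto (fun p : ι × X => (F p.1 x₀, F p.1 p.2)) (𝓝 (i₀, x₀)) (𝓤 α) :=
    fun U hU => by
      rw [mem_map, nhds_prod_eq]
      exact mem_of_superset (prod_mem_prod univ_mem (hF x₀ U hU)) fun p hp => hp.2 p.1
  exact hfst.uniformity_trans hsnd

end Equicontinuity

theorem continuous_of_isClosed_graph {X Y : Type*} [TopologicalSpace X] [TopologicalSpace Y]
    [CompactSpace Y] {f : X → Y} (hf : IsClosed {p : X × Y | p.2 = f p.1}) : Continuous f := by
  refine continuous_iff_isClosed.2 fun C hC => ?_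
  have hpre : f ⁻¹' C = Prod.fst '' ({p : X × Y | p.2 = f p.1} ∩ Prod.snd ⁻¹' C) := by
    ext x
    refine ⟨fun hx => ⟨(x, f x), ⟨rfl, hx⟩, rfl⟩, ?_⟩
    rintro ⟨p, ⟨hp, hpC⟩, rfl⟩
    rw [mem_preimage, ← hp]
    exact hpC
  rw [hpre]
  exact isClosedMap_fst_of_compactSpace _ (hf.inter (hC.preimage continuous_snd))

theorem exists_idempotent_comp {X : Type*} [TopologicalSpace X] [T2Space X] {S : Set (X → X)}
    (hne : S.Nonempty) (hS : IsCompact S) (hcomp : ∀ f ∈ S, ∀ g ∈ S, f ∘ g ∈ S) :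
    ∃ u ∈ S, u ∘ u = u := by
  -- Ellis–Numakura in the monoid `Function.End X` (composition), topologized as `X → X`
  let _ : TopologicalSpace (Function.End X) := Pi.topologicalSpace
  have : T2Space (Function.End X) := inferInstanceAs (T2Space (X → X))
  exact exists_idempotent_in_compact_subsemigroup (M := Function.End X) Pi.continuous_precomp
    S hne hS hcomp

/-- `DiscreteSpectrum φ` unfolds to density of the span of this set. -/
def unimodularEigenfunctions {K : Type*} [TopologicalSpace K] (φ : K → K) : Set C(K, ℂ) :=
  {f | f ≠ 0 ∧ ∃ lam : ℂ, ‖lam‖ = 1 ∧ ∀ x, f (φ x) = lam * f x}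

namespace Ellis

variable {K : Type*} [TopologicalSpace K] {φ ψ χ : K → K}

theorem iterate_mem (φ : K → K) (n : ℕ) : φ^[n] ∈ Ellis φ := subset_closure ⟨n, rfl⟩

theorem subset_of_isClosed {s : Set (K → K)} (hs : IsClosed s) (hφs : ∀ n, φ^[n] ∈ s) :
    Ellis φ ⊆ s :=
  closure_minimal (by rintro _ ⟨n, rfl⟩; exact hφs n) hs

theorem isCompact [CompactSpace K] (φ : K → K) : IsCompact (Ellis φ) :=
  isClosed_closure.isCompact

instance [CompactSpace K] (φ : K → K) : CompactSpace (Ellis φ) :=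
  isCompact_iff_compactSpace.1 (isCompact φ)

theorem comp_mem (hφ : Continuous φ) (hψ : ψ ∈ Ellis φ) (hχ : χ ∈ Ellis φ) :
    ψ ∘ χ ∈ Ellis φ := by
  have hiterate_comp : ∀ n, ∀ χ ∈ Ellis φ, φ^[n] ∘ χ ∈ Ellis φ := fun n =>
    subset_of_isClosed (isClosed_closure.preimage (Pi.continuous_postcomp (hφ.iterate n)))
      fun m => by
        change φ^[n] ∘ φ^[m] ∈ Ellis φ
        rw [← iterate_add]
        exact iterate_mem φ (n + m)
  exact subset_of_isClosed (s := (· ∘ χ) ⁻¹' Ellis φ)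
    (isClosed_closure.preimage (Pi.continuous_precomp χ)) (fun n => hiterate_comp n χ hχ) hψ

theorem comp_comm_of_continuous [T2Space K] (hφ : Continuous φ) (hψ : ψ ∈ Ellis φ)
    (hχ : χ ∈ Ellis φ) (hχc : Continuous χ) : ψ ∘ χ = χ ∘ ψ := by
  have hcomm : ∀ {f : K → K}, Continuous f → (∀ n, f ∘ φ^[n] = φ^[n] ∘ f) →
      ∀ g ∈ Ellis φ, f ∘ g = g ∘ f := fun hf hfφ =>
    subset_of_isClosed (isClosed_eq (Pi.continuous_postcomp hf) (Pi.continuous_precomp _)) hfφ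
  have hφχ : ∀ n, φ^[n] ∘ χ = χ ∘ φ^[n] :=
    fun n => hcomm (hφ.iterate n) (fun m => funext (Commute.iterate_iterate_self φ n m)) χ hχ
  exact (hcomm hχc (fun n => (hφχ n).symm) ψ hψ).symm

theorem exists_comp_eq_mul_of_eigenfunction {f : K → ℂ} (hf : Continuous f) {lam : ℂ}
    (hlam : ‖lam‖ = 1) (heig : ∀ x, f (φ x) = lam * f x) (hψ : ψ ∈ Ellis φ) :
    ∃ μ : ℂ, ‖μ‖ = 1 ∧ ∀ x, f (ψ x) = μ * f x := by
  have hclosed : IsClosed ((f ∘ ·) ⁻¹' ((· • f) '' Metric.sphere (0 : ℂ) 1)) :=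
    (((isCompact_sphere 0 1).image (continuous_id.smul continuous_const)).isClosed).preimage
      (Pi.continuous_postcomp hf)
  have hiterate : ∀ n, lam ^ n • f = f ∘ φ^[n] := fun n => funext fun x => by
    simp [(Semiconj.iterate_right heig n).eq, mul_left_iterate]
  obtain ⟨μ, hμ, hfψ⟩ :=
    subset_of_isClosed hclosed (fun n => ⟨lam ^ n, by simp [hlam], hiterate n⟩) hψ
  exact ⟨μ, by simpa using hμ, fun x => (congrFun hfψ x).symm⟩

theorem equicontinuous_comp_eigenfunction {f : C(K, ℂ)} (hf : f ∈ unimodularEigenfunctions φ) :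
    Equicontinuous fun ψ : Ellis φ => f ∘ (ψ : K → K) := by
  obtain ⟨-, lam, hlam, heig⟩ := hf
  choose μ hμ hfμ using fun ψ : Ellis φ =>
    exists_comp_eq_mul_of_eigenfunction f.continuous hlam heig ψ.2
  have hfψ : (fun ψ : Ellis φ => f ∘ (ψ : K → K)) = fun ψ => (μ ψ * ·) ∘ f :=
    funext fun ψ => funext (hfμ ψ)
  rw [hfψ]
  refine equicontinuous_isometry_comp (fun ψ => Isometry.of_dist_eq fun a b => ?_) f.continuous
  rw [dist_eq_norm, dist_eq_norm, ← mul_sub, norm_mul, hμ, one_mul]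

variable [CompactSpace K]

theorem equicontinuous_comp (hds : DiscreteSpectrum φ) (g : C(K, ℂ)) :
    Equicontinuous fun ψ : Ellis φ => g ∘ (ψ : K → K) := by
  have hspan : ∀ h ∈ Submodule.span ℂ (unimodularEigenfunctions φ),
      Equicontinuous fun ψ : Ellis φ => h ∘ (ψ : K → K) := by
    intro h hh
    induction hh using Submodule.span_induction with
    | mem f hf => exact equicontinuous_comp_eigenfunction hf
    | zero => exact fun _ _ hU => Eventually.of_forall fun _ _ => refl_mem_uniformity hU
    | add f₁ f₂ _ _ h₁ h₂ => exact h₁.add h₂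
    | smul c f _ hf => exact (uniformContinuous_const_smul c).comp_equicontinuous hf
  refine equicontinuous_comp_of_uniform_approx fun ε hε => ?_
  obtain ⟨h, hh, hgh⟩ := hds.exists_dist_lt g hε
  exact ⟨h, fun y => (ContinuousMap.dist_apply_le_dist y).trans_lt hgh, hspan h hh⟩

variable [T2Space K]

theorem continuous_eval (hds : DiscreteSpectrum φ) :
    Continuous fun p : Ellis φ × K => (p.1 : K → K) p.2 :=
  continuous_of_forall_continuousMap_comp fun g =>
    (equicontinuous_comp hds g).continuous_uncurry fun x =>
      g.continuous.comp ((continuous_apply x).comp continuous_subtype_val)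

theorem continuous_of_mem (hds : DiscreteSpectrum φ) (hψ : ψ ∈ Ellis φ) : Continuous ψ :=
  (continuous_eval hds).comp (Continuous.prodMk_right (⟨ψ, hψ⟩ : Ellis φ))

theorem continuous_comp (hds : DiscreteSpectrum φ) :
    Continuous fun z : Ellis φ × Ellis φ => (z.1 : K → K) ∘ (z.2 : K → K) :=
  continuous_pi fun x => (continuous_eval hds).comp
    (continuous_fst.prodMk ((continuous_apply x).comp (continuous_subtype_val.comp continuous_snd)))

theorem comp_comm (hφ : Continuous φ) (hds : DiscreteSpectrum φ) (hψ : ψ ∈ Ellis φ)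
    (hχ : χ ∈ Ellis φ) : ψ ∘ χ = χ ∘ ψ :=
  comp_comm_of_continuous hφ hψ hχ (continuous_of_mem hds hχ)

theorem injective_of_mem (hds : DiscreteSpectrum φ) (hψ : ψ ∈ Ellis φ) : Injective ψ := by
  intro x y hxy
  let δ : C(K, ℂ) →L[ℂ] ℂ := ContinuousMap.evalCLM ℂ x - ContinuousMap.evalCLM ℂ y
  have hspan : Submodule.span ℂ (unimodularEigenfunctions φ) ≤ δ.ker := by
    refine Submodule.span_le.2 ?_
    rintro f ⟨-, lam, hlam, heig⟩
    obtain ⟨μ, hμ, hfψ⟩ := exists_comp_eq_mul_of_eigenfunction f.continuous hlam heig hψ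
    have hμ0 : μ ≠ 0 := norm_ne_zero_iff.1 (by rw [hμ]; exact one_ne_zero)
    have hfxy : μ * f x = μ * f y := by rw [← hfψ, ← hfψ, hxy]
    simpa [δ, sub_eq_zero] using mul_left_cancel₀ hμ0 hfxy
  refine isClosedEmbedding_eval_continuousMap.injective (funext fun g => ?_)
  have hg : g ∈ δ.ker :=
    δ.isClosed_ker.closure_subset_iff.2 hspan (hds.closure_eq ▸ mem_univ g)
  simpa [δ, sub_eq_zero] using hg

theorem exists_comp_eq_id (hφ : Continuous φ) (hds : DiscreteSpectrum φ) (hψ : ψ ∈ Ellis φ) :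
    ∃ χ ∈ Ellis φ, ψ ∘ χ = id := by
  have hcomp : ∀ f ∈ (ψ ∘ ·) '' Ellis φ, ∀ g ∈ (ψ ∘ ·) '' Ellis φ, f ∘ g ∈ (ψ ∘ ·) '' Ellis φ := by
    rintro _ ⟨a, ha, rfl⟩ _ ⟨b, hb, rfl⟩
    exact ⟨a ∘ ψ ∘ b, comp_mem hφ ha (comp_mem hφ hψ hb), rfl⟩
  obtain ⟨_, ⟨χ, hχ, rfl⟩, hidem⟩ := exists_idempotent_comp
    (Nonempty.image _ ⟨id, iterate_mem φ 0⟩)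
    ((isCompact φ).image (Pi.continuous_postcomp (continuous_of_mem hds hψ))) hcomp
  exact ⟨χ, hχ, funext fun x => injective_of_mem hds (comp_mem hφ hψ hχ) (congrFun hidem x)⟩

theorem exists_inverse (hφ : Continuous φ) (hds : DiscreteSpectrum φ) (hψ : ψ ∈ Ellis φ) :
    ∃ χ ∈ Ellis φ, ψ ∘ χ = id ∧ χ ∘ ψ = id := by
  obtain ⟨χ, hχ, hψχ⟩ := exists_comp_eq_id hφ hds hψ
  exact ⟨χ, hχ, hψχ, comp_comm hφ hds hψ hχ ▸ hψχ⟩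

theorem continuous_of_comp_eq_id (hφ : Continuous φ) (hds : DiscreteSpectrum φ)
    {inv : Ellis φ → Ellis φ} (hinv : ∀ ψ, (inv ψ : K → K) ∘ (ψ : K → K) = id) :
    Continuous inv := by
  refine continuous_of_isClosed_graph ?_
  have hgraph : {p : Ellis φ × Ellis φ | p.2 = inv p.1} = {p | (p.2 : K → K) ∘ p.1 = id} := by
    ext ⟨ψ, χ⟩
    obtain ⟨ψ', -, hψψ', -⟩ := exists_inverse hφ hds ψ.2
    change χ = inv ψ ↔ (χ : K → K) ∘ ψ = id
    refine ⟨by rintro rfl; exact hinv ψ, fun h => Subtype.ext ?_⟩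
    exact (LeftInverse.eq_rightInverse (f := ψ) (congrFun h) (congrFun hψψ')).trans
      (LeftInverse.eq_rightInverse (f := ψ) (congrFun (hinv ψ)) (congrFun hψψ')).symm
  rw [hgraph]
  exact isClosed_eq ((continuous_comp hds).comp continuous_swap) continuous_const

end Ellis

/-- Let `(K, φ)` be a topological dynamical system with discrete spectrum.
Then the Ellis semigroup `E(K, φ)` is a compact subset of `K^K` consisting of homeomorphisms
of `K`, and under composition it is a commutative topological group: it is closed under
composition, composition is commutative on it and jointly continuous, every element has an
inverse in `E(K, φ)`, and inversion is continuous. -/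
theorem ellis_compact_abelian_topological_group
    {K : Type*} [TopologicalSpace K] [CompactSpace K] [T2Space K]
    (φ : K → K) (hφ : Continuous φ) (hds : DiscreteSpectrum φ) :
    IsCompact (Ellis φ) ∧
    (∀ ψ ∈ Ellis φ, ∃ e : K ≃ₜ K, ⇑e = ψ) ∧
    (∀ ψ ∈ Ellis φ, ∀ χ ∈ Ellis φ, ψ ∘ χ ∈ Ellis φ ∧ ψ ∘ χ = χ ∘ ψ) ∧
    (∀ ψ ∈ Ellis φ, ∃ χ ∈ Ellis φ, ψ ∘ χ = id ∧ χ ∘ ψ = id) ∧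
    Continuous (fun z : ↥(Ellis φ) × ↥(Ellis φ) =>
      ((↑z.1 : K → K) ∘ (↑z.2 : K → K) : K → K)) ∧
    (∀ inv : ↥(Ellis φ) → ↥(Ellis φ),
      (∀ ψ : ↥(Ellis φ), (↑(inv ψ) : K → K) ∘ (↑ψ : K → K) = id) →
      Continuous inv) := by
  refine ⟨Ellis.isCompact φ, fun ψ hψ => ?_,
    fun ψ hψ χ hχ => ⟨Ellis.comp_mem hφ hψ hχ, Ellis.comp_comm hφ hds hψ hχ⟩,
    fun ψ hψ => Ellis.exists_inverse hφ hds hψ, Ellis.continuous_comp hds,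
    fun inv hinv => Ellis.continuous_of_comp_eq_id hφ hds hinv⟩
  obtain ⟨χ, -, hψχ, hχψ⟩ := Ellis.exists_inverse hφ hds hψ
  exact ⟨(Ellis.continuous_of_mem hds hψ).homeoOfEquivCompactToT2
    (f := ⟨ψ, χ, congrFun hχψ, congrFun hψχ⟩), rfl⟩
end
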